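/- arXiv:2602.17289 — 2 statements merged into one kernel-verified Lean document; each statement's English description precedes it below -/
import Mathlib

section
/- Let a, b ≥ 0 with a + b > 0, and let X and Y be independent ℕ-valued random variables with X distributed as Poisson(a) and Y distributed as Poisson(b). Then E[ (X/(X+Y)) · 1_{X+Y ≥ 1} ] = (a/(a+b)) · (1 − e^{−(a+b)}). -/
/-!
For `X ~ Po(a)` the Chen–Stein identity `E[X f(X, Y)] = a E[f(X + 1, Y)]` holds for every `f` and
every `Y` independent of `X`. With `f(m, n) = 1 / (m + n)` it gives `E[X / (X + Y)] = a T` and,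
symmetrically, `E[Y / (X + Y)] = b T`, where `T = E[1 / (X + Y + 1)]`. The two ratios add up to
the indicator of `X + Y ≠ 0`, and `X + Y ~ Po(a + b)`, so `(a + b) T = 1 - e^{-(a + b)}`.
-/

open MeasureTheory ProbabilityTheory Real

open scoped NNReal

namespace ProbabilityTheory

variable {Ω : Type*} {mΩ : MeasurableSpace Ω} {μ : Measure Ω}

lemma poissonMeasure_real_singleton_succ (r : ℝ≥0) (n : ℕ) :
    (n + 1 : ℝ) * Po(r).real {n + 1} = r * Po(r).real {n} := by
  simp only [poissonMeasure_real_singleton, Nat.factorial_succ, Nat.cast_mul, pow_succ]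
  field_simp
  push_cast
  ring

lemma HasLaw.measureReal_ne_zero_of_poissonMeasure [IsProbabilityMeasure μ] {r : ℝ≥0}
    {S : Ω → ℕ} (hS : HasLaw S Po(r) μ) : μ.real {ω | S ω ≠ 0} = 1 - exp (-r) := by
  rw [hS.measureReal_eq (p := (· ≠ 0)) (measurableSet_singleton 0).compl,
    ← Set.compl_ofPred, Set.ofPred_eq_eq_singleton,
    probReal_compl_eq_one_sub (measurableSet_singleton 0), poissonMeasure_real_singleton]
  simp

lemma hasLaw_of_measure_preimage_singleton {α : Type*} [MeasurableSpace α] [Countable α]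
    [MeasurableSingletonClass α] {X : Ω → α} (hX : Measurable X) {ν : Measure α}
    (h : ∀ x, μ (X ⁻¹' {x}) = ν {x}) : HasLaw X ν μ where
  aemeasurable := hX.aemeasurable
  map_eq := Measure.ext_of_singleton fun x ↦ by
    rw [Measure.map_apply hX (measurableSet_singleton x), h]

lemma integral_eq_tsum_of_countable {α : Type*} [MeasurableSpace α] [Countable α]
    [MeasurableSingletonClass α] (ν : Measure α) [IsFiniteMeasure ν] (f : α → ℝ) :
    ∫ x, f x ∂ν = ∑' x, ν.real {x} * f x := by
  conv_lhs => rw [← Measure.sum_smul_dirac ν]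
  rw [integral_sum_dirac fun x ↦ measure_ne_top ν {x}]
  rfl

lemma integrable_comp_of_norm_le {α : Type*} [MeasurableSpace α] [Countable α]
    [MeasurableSingletonClass α] [IsFiniteMeasure μ] {Z : Ω → α} (hZ : Measurable Z)
    {f : α → ℝ} {C : ℝ} (hf : ∀ x, ‖f x‖ ≤ C) : Integrable (fun ω ↦ f (Z ω)) μ :=
  .of_bound (Measurable.of_discrete.comp hZ).aestronglyMeasurable C (.of_forall fun ω ↦ hf (Z ω))

lemma integral_mul_inv_self {Z : Ω → ℝ} (hZ : Measurable Z) :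
    ∫ ω, Z ω * (Z ω)⁻¹ ∂μ = μ.real {ω | Z ω ≠ 0} := by
  rw [← integral_indicator_one (s := {ω | Z ω ≠ 0}) (hZ (measurableSet_singleton 0)).compl]
  congr with ω
  by_cases h : Z ω = 0 <;> simp [h]

lemma integral_div_add_add_integral_div_add [IsFiniteMeasure μ] {X Y : Ω → ℕ}
    (hX : Measurable X) (hY : Measurable Y) :
    ∫ ω, (X ω : ℝ) / (X ω + Y ω) ∂μ + ∫ ω, (Y ω : ℝ) / (X ω + Y ω) ∂μ =
      μ.real {ω | X ω + Y ω ≠ 0} := by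
  have hle : ∀ m n : ℕ, ‖(m : ℝ) / (m + n)‖ ≤ 1 := fun m n ↦ by
    rw [Real.norm_of_nonneg (by positivity)]
    exact div_le_one_of_le₀ (by simp) (by positivity)
  have hXint : Integrable (fun ω ↦ (X ω : ℝ) / (X ω + Y ω)) μ :=
    integrable_comp_of_norm_le (hX.prodMk hY) fun p ↦ hle p.1 p.2
  have hYint : Integrable (fun ω ↦ (Y ω : ℝ) / (X ω + Y ω)) μ :=
    integrable_comp_of_norm_le (hX.prodMk hY) fun p ↦ add_comm (p.1 : ℝ) p.2 ▸ hle p.2 p.1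
  rw [← integral_add hXint hYint]
  simp_rw [← add_div, div_eq_mul_inv]
  rw [integral_mul_inv_self (by fun_prop)]
  norm_cast

variable {β : Type*} [MeasurableSpace β]

lemma tsum_poissonMeasure_prod_mul_fst (r : ℝ≥0) (ν : Measure β) [SFinite ν] (f : ℕ × β → ℝ) :
    ∑' p, (Po(r).prod ν).real {p} * (p.1 * f p) =
      r * ∑' p, (Po(r).prod ν).real {p} * f (p.1 + 1, p.2) := by
  have hinj : Function.Injective fun p : ℕ × β ↦ (p.1 + 1, p.2) := fun p q h ↦ by
    simp only [Prod.mk.injEq, Nat.add_right_cancel_iff] at h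
    exact Prod.ext h.1 h.2
  rw [← hinj.tsum_eq, ← tsum_mul_left]
  · refine tsum_congr fun ⟨m, y⟩ ↦ ?_
    simp only [← Set.singleton_prod_singleton, measureReal_prod_prod]
    push_cast
    linear_combination (ν.real {y} * f (m + 1, y)) * poissonMeasure_real_singleton_succ r m
  · rintro ⟨m, y⟩ hp
    obtain ⟨k, rfl⟩ : ∃ k, m = k + 1 :=
      Nat.exists_eq_succ_of_ne_zero fun h ↦ hp (by simp [h])
    exact ⟨(k, y), rfl⟩

variable [Countable β] [MeasurableSingletonClass β]

lemma IndepFun.integral_mul_eq_of_hasLaw_poissonMeasure [IsFiniteMeasure μ] {r : ℝ≥0}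
    {X : Ω → ℕ} {Y : Ω → β} {ν : Measure β} [IsFiniteMeasure ν] (hXY : IndepFun X Y μ)
    (hX : HasLaw X Po(r) μ) (hY : HasLaw Y ν μ) (f : ℕ × β → ℝ) :
    ∫ ω, X ω * f (X ω, Y ω) ∂μ = r * ∫ ω, f (X ω + 1, Y ω) ∂μ := by
  have hXY_law := hXY.hasLaw_prod hX hY
  have h₁ := hXY_law.integral_comp (f := fun p : ℕ × β ↦ p.1 * f p) .of_discrete
  have h₂ := hXY_law.integral_comp (f := fun p : ℕ × β ↦ f (p.1 + 1, p.2)) .of_discrete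
  simp only [Function.comp_def] at h₁ h₂
  rw [h₁, h₂, integral_eq_tsum_of_countable, integral_eq_tsum_of_countable,
    tsum_poissonMeasure_prod_mul_fst]

lemma IndepFun.integral_div_add_of_hasLaw_poissonMeasure [IsFiniteMeasure μ] {r : ℝ≥0}
    {X Y : Ω → ℕ} {ν : Measure ℕ} [IsFiniteMeasure ν] (hXY : IndepFun X Y μ)
    (hX : HasLaw X Po(r) μ) (hY : HasLaw Y ν μ) :
    ∫ ω, (X ω : ℝ) / (X ω + Y ω) ∂μ = r * ∫ ω, ((X ω : ℝ) + Y ω + 1)⁻¹ ∂μ := by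
  simp_rw [div_eq_mul_inv]
  rw [hXY.integral_mul_eq_of_hasLaw_poissonMeasure hX hY fun p ↦ ((p.1 : ℝ) + p.2)⁻¹]
  congr with ω
  push_cast
  ring_nf

end ProbabilityTheory

/-- If `X ~ Poisson(a)` and `Y ~ Poisson(b)` are independent with `a + b > 0`, then
`E[(X/(X+Y)) · 1_{X+Y ≥ 1}] = (a/(a+b)) · (1 − e^{−(a+b)})`. -/
theorem poisson_ratio_indicator_expectation
    {Ω : Type*} [MeasurableSpace Ω] (μ : Measure Ω) [IsProbabilityMeasure μ]
    (a b : ℝ) (ha : 0 ≤ a) (hb : 0 ≤ b) (hab : 0 < a + b)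
    (X Y : Ω → ℕ) (hX : Measurable X) (hY : Measurable Y)
    (hXY : IndepFun X Y μ)
    (hXd : ∀ k : ℕ, μ {ω | X ω = k} = ENNReal.ofReal (Real.exp (-a) * a ^ k / (k.factorial : ℝ)))
    (hYd : ∀ k : ℕ, μ {ω | Y ω = k} = ENNReal.ofReal (Real.exp (-b) * b ^ k / (k.factorial : ℝ))) :
    ∫ ω, (if 1 ≤ X ω + Y ω then (X ω : ℝ) / ((X ω : ℝ) + (Y ω : ℝ)) else 0) ∂μ
      = (a / (a + b)) * (1 - Real.exp (-(a + b))) := by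
  lift a to ℝ≥0 using ha
  lift b to ℝ≥0 using hb
  have hXlaw : HasLaw X Po(a) μ := hasLaw_of_measure_preimage_singleton hX fun k ↦
    (hXd k).trans (poissonMeasure_singleton a k).symm
  have hYlaw : HasLaw Y Po(b) μ := hasLaw_of_measure_preimage_singleton hY fun k ↦
    (hYd k).trans (poissonMeasure_singleton b k).symm
  -- off `1 ≤ X + Y` the ratio is `0 / 0 = 0`, so the indicator can be dropped
  have hratio : ∀ ω, (if 1 ≤ X ω + Y ω then (X ω : ℝ) / ((X ω : ℝ) + (Y ω : ℝ)) else 0) =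
      (X ω : ℝ) / (X ω + Y ω) := fun ω ↦ by
    split_ifs with h
    · rfl
    · simp [show X ω = 0 by omega]
  have hXT := hXY.integral_div_add_of_hasLaw_poissonMeasure hXlaw hYlaw
  have hYT := hXY.symm.integral_div_add_of_hasLaw_poissonMeasure hYlaw hXlaw
  have hsum := integral_div_add_add_integral_div_add (μ := μ) hX hY
  simp only [add_comm (Y _ : ℝ) (X _ : ℝ)] at hYT
  have hS := (hXY.hasLaw_add_poissonMeasure hXlaw hYlaw).measureReal_ne_zero_of_poissonMeasure
  rw [hXT, hYT] at hsum
  simp_rw [hratio, hXT]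
  rw [div_mul_eq_mul_div, eq_div_iff hab.ne']
  push_cast at hS
  linear_combination (a : ℝ) * hsum.trans hS
end

section
/- For all real numbers a, b ≥ 0 with a + b > 0, the double series identity ∑_{n=1}^∞ (1/n) ∑_{k=1}^n k · (a^k / k!) · (b^{n−k} / (n−k)!) = (a/(a+b)) · (e^{a+b} − 1) holds. -/
/-!
Since `k · a^k / k! = a · a^(k-1) / (k-1)!`, the binomial theorem turns the inner sum into
`a (a+b)^(n-1) / (n-1)!`, so the `n`-th term is `a/(a+b) · (a+b)^n / n!`, and the outer sum is
the exponential series of `a + b` without its constant term.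
-/

open Real Finset
open scoped Nat

theorem add_pow_div_factorial {K : Type*} [Field K] [CharZero K] (a b : K) (m : ℕ) :
    (a + b) ^ m / m ! = ∑ j ∈ range (m + 1), a ^ j / j ! * (b ^ (m - j) / (m - j)!) := by
  rw [add_pow, sum_div]
  refine sum_congr rfl fun j hj => ?_
  have : (m ! : K) ≠ 0 := Nat.cast_ne_zero.mpr m.factorial_ne_zero
  rw [Nat.cast_choose K (mem_range_succ_iff.mp hj)]
  field_simp

theorem sum_Icc_mul_pow_div_factorial {K : Type*} [Field K] [CharZero K] (a b : K) (m : ℕ) :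
    ∑ k ∈ Icc 1 (m + 1), (k : K) * (a ^ k / k !) * (b ^ (m + 1 - k) / (m + 1 - k)!) =
      a * ((a + b) ^ m / m !) := by
  rw [add_pow_div_factorial, mul_sum, ← Ico_add_one_right_eq_Icc, sum_Ico_eq_sum_range]
  refine sum_congr (by simp) fun j _ => ?_
  rw [add_comm 1 j, Nat.add_sub_add_right, Nat.factorial_succ, pow_succ']
  push_cast
  field_simp

theorem Real.hasSum_pow_succ_div_factorial (x : ℝ) :
    HasSum (fun m : ℕ => x ^ (m + 1) / (m + 1)!) (exp x - 1) := by
  simpa [← Real.exp_eq_exp_ℝ] using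
    (hasSum_nat_add_iff' 1).mpr (NormedSpace.expSeries_div_hasSum_exp x)

theorem double_series_binomial_poisson_general
    (a b : ℝ) (hab : 0 < a + b) :
    (∑' n : ℕ, (1 / (n : ℝ)) *
        ∑ k ∈ Finset.Icc 1 n,
          (k : ℝ) * (a ^ k / (k.factorial : ℝ)) * (b ^ (n - k) / ((n - k).factorial : ℝ)))
      = (a / (a + b)) * (Real.exp (a + b) - 1) := by
  have hab₀ : a + b ≠ 0 := hab.ne'
  have hterm : ∀ m : ℕ, (1 / ((m + 1 : ℕ) : ℝ)) * ∑ k ∈ Icc 1 (m + 1),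
        (k : ℝ) * (a ^ k / (k.factorial : ℝ)) * (b ^ (m + 1 - k) / ((m + 1 - k).factorial : ℝ)) =
      a / (a + b) * ((a + b) ^ (m + 1) / (m + 1)!) := fun m => by
    rw [sum_Icc_mul_pow_div_factorial, Nat.factorial_succ, pow_succ]
    push_cast
    field_simp
  refine HasSum.tsum_eq ((hasSum_nat_add_iff' 1).mp ?_)
  simp only [range_one, sum_singleton, Nat.cast_zero, div_zero, zero_mul, sub_zero, hterm]
  exact (Real.hasSum_pow_succ_div_factorial (a + b)).mul_left (a / (a + b))

/-- For `a, b ≥ 0` with `a + b > 0`,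
`∑_{n=1}^∞ (1/n) ∑_{k=1}^n k · (a^k/k!) · (b^{n−k}/(n−k)!) = (a/(a+b)) · (e^{a+b} − 1)`.
(The `n = 0` term of the `tsum` below vanishes, since the inner sum is empty.) -/
theorem double_series_binomial_poisson
    (a b : ℝ) (ha : 0 ≤ a) (hb : 0 ≤ b) (hab : 0 < a + b) :
    (∑' n : ℕ, (1 / (n : ℝ)) *
        ∑ k ∈ Finset.Icc 1 n,
          (k : ℝ) * (a ^ k / (k.factorial : ℝ)) * (b ^ (n - k) / ((n - k).factorial : ℝ)))
      = (a / (a + b)) * (Real.exp (a + b) - 1) :=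
  double_series_binomial_poisson_general a b hab
end
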